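/- Let n ≥ 1, let A and U₀ be real n×n matrices, and let a ∈ ℝ be a root of C_A := charpoly A of multiplicity p (C_A^{(i)}(a) = 0 for i < p, C_A^{(p)}(a) ≠ 0). Let f(t) := eval of charpoly(A + t·U₀) at a, a polynomial function of the real variable t, and assume f'(0) ≠ 0. Let ε ∈ ℝ* be a nonzero infinitesimal and let ξ ∈ ℝ* be infinitesimal such that a + ξ is a root of charpoly(A_* + ε·U₀_*). Then ξ^p·C_A^{(p)}(a)/(p!·ε·f'(0)) has standard part −1; that is, ξ^p ≈ −p!·ε·f'(0)/C_A^{(p)}(a) up to a factor infinitely close to 1. -/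

import Mathlib

open Hyperreal Polynomial

/-- The coercion `ℝ → ℝ*` as a ring homomorphism. -/
noncomputable def realToHyper : ℝ →+* ℝ* :=
  (Filter.Germ.coeRingHom _).comp (Pi.constRingHom ℕ ℝ)

/-!
Write `charpoly (A + t • U₀)` evaluated at `a + x` as `G = ∑ⱼ gⱼ(t) xʲ` with `gⱼ ∈ ℝ[t]`. At
`t = 0` the `gⱼ(0)` are the Taylor coefficients of `charpoly A` at `a`, so they vanish for `j < p`
and `gₚ(0) = C_A⁽ᵖ⁾(a) / p!`, while `g₀ = f`. Splitting off the part of `G` divisible by `t` gives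
`G = xᵖ R(x) + t H(t, x)` with `R(0) = gₚ(0)` and `H(0, 0) = f'(0)`. At `(t, x) = (ε, ξ)` this
reads `ξᵖ R(ξ) = -ε H(ε, ξ)`, and `R(ξ)`, `H(ε, ξ)` have standard parts `gₚ(0)`, `f'(0)`.
-/

set_option linter.deprecated false

namespace Polynomial

variable {R : Type*} [CommRing R]

theorem eval_iterate_derivative_eq_factorial_mul (P : R[X]) (k : ℕ) (r : R) :
    (derivative^[k] P).eval r = k.factorial * (hasseDeriv k P).eval r := by
  rw [← factorial_smul_hasseDeriv]
  simp [nsmul_eq_mul]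

theorem C_X_dvd_sub_map_C_map_evalRingHom_zero (G : R[X][X]) :
    C X ∣ G - (G.map (evalRingHom 0)).map C := by
  rw [C_dvd_iff_dvd_coeff]
  intro i
  simpa [coeff_zero_eq_eval_zero] using X_dvd_sub_C (p := G.coeff i)

end Polynomial

@[simp]
theorem realToHyper_apply (r : ℝ) : realToHyper r = r := rfl

theorem isSt_eval_map_realToHyper (P : ℝ[X]) {x : ℝ*} {r : ℝ} (h : IsSt x r) :
    IsSt ((P.map realToHyper).eval x) (P.eval r) := by
  induction P using Polynomial.induction_on with
  | C c => simpa using isSt_refl_real c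
  | add P Q hP hQ => simpa using hP.add hQ
  | monomial n c ih =>
    rw [pow_succ, ← mul_assoc]
    simpa using ih.mul h

theorem isSt_eval_map_eval₂RingHom_realToHyper (H : ℝ[X][X]) {e ξ : ℝ*} {s r : ℝ}
    (he : IsSt e s) (hξ : IsSt ξ r) :
    IsSt ((H.map (eval₂RingHom realToHyper e)).eval ξ) ((H.map (evalRingHom s)).eval r) := by
  induction H using Polynomial.induction_on with
  | C q => simpa [← eval_map] using isSt_eval_map_realToHyper q he
  | add P Q hP hQ => simpa using hP.add hQ
  | monomial n c ih =>
    rw [pow_succ, ← mul_assoc]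
    simpa using ih.mul hξ

theorem isSt_mul_div_of_mul_add_mul_eq_zero {x e B S : ℝ*} {b d : ℝ}
    (h : x * B + e * S = 0) (hB : IsSt B b) (hS : IsSt S d) (hb : b ≠ 0) (hd : d ≠ 0)
    (he : e ≠ 0) : IsSt (x * b / (e * d)) (-1) := by
  have hB0 : B ≠ 0 := by rintro rfl; exact hb (hB.unique (isSt_refl_real 0))
  have hBinv : IsSt B⁻¹ b⁻¹ := hB.inv fun h0 => hb (hB.unique h0)
  have hx : x * b / (e * d) = -(S * B⁻¹) * (b / d : ℝ) := by
    have hxB : x = -(e * S) / B := by rw [eq_div_iff hB0]; linear_combination h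
    rw [hxB, coe_div]
    field_simp
  rw [hx]
  convert ((hS.mul hBinv).neg).mul (isSt_refl_real (b / d)) using 1
  field_simp

theorem isSt_pow_mul_div_of_eval_map_eq_zero (G : ℝ[X][X]) (p : ℕ)
    (hvanish : ∀ j < p, (G.coeff j).eval 0 = 0) (hp : (G.coeff p).eval 0 ≠ 0)
    (hd : (G.coeff 0).derivative.eval 0 ≠ 0) {e ξ : ℝ*} (he0 : e ≠ 0) (he : Infinitesimal e)
    (hξ : Infinitesimal ξ) (hroot : (G.map (eval₂RingHom realToHyper e)).eval ξ = 0) :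
    IsSt (ξ ^ p * ((G.coeff p).eval 0 : ℝ) / (e * ((G.coeff 0).derivative.eval 0 : ℝ))) (-1) := by
  set ψ := eval₂RingHom realToHyper e
  obtain ⟨H, hH⟩ := C_X_dvd_sub_map_C_map_evalRingHom_zero G
  set P₀ := G.map (evalRingHom 0)
  obtain ⟨R, hR⟩ : X ^ p ∣ P₀ := X_pow_dvd_iff.mpr fun j hj => by simpa [P₀] using hvanish j hj
  have hψC : ψ.comp C = realToHyper := RingHom.ext fun r => by simp [ψ]
  have hsplit : ξ ^ p * (R.map realToHyper).eval ξ + e * (H.map ψ).eval ξ = 0 := by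
    rw [← hroot, eq_add_of_sub_eq' hH, Polynomial.map_add, Polynomial.map_map, hψC, hR]
    simp [ψ]
  have hRst : IsSt ((R.map realToHyper).eval ξ) ((G.coeff p).eval 0) := by
    have hcoeff : (G.coeff p).eval 0 = R.eval 0 := by
      simpa [P₀, coeff_X_pow_mul', coeff_zero_eq_eval_zero] using congrArg (coeff · p) hR
    rw [hcoeff]
    exact isSt_eval_map_realToHyper R hξ
  have hHst : IsSt ((H.map ψ).eval ξ) ((G.coeff 0).derivative.eval 0) := by
    have hcoeff : G.coeff 0 = C ((G.coeff 0).eval 0) + X * H.coeff 0 := by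
      simpa [P₀, sub_eq_iff_eq_add'] using congrArg (coeff · 0) hH
    have hderiv : (G.coeff 0).derivative.eval 0 = (H.map (evalRingHom 0)).eval 0 := by
      rw [hcoeff]; simp [coeff_zero_eq_eval_zero]
    rw [hderiv]
    exact isSt_eval_map_eval₂RingHom_realToHyper H he hξ
  exact isSt_mul_div_of_mul_add_mul_eq_zero hsplit hRst hHst hp hd he0

namespace Matrix

variable {n R S : Type*} [CommRing R] [CommRing S]

noncomputable def linearPencil (A U : Matrix n n R) : Matrix n n R[X] :=
  A.map C + (X : R[X]) • U.map C

theorem linearPencil_map_eval₂RingHom (A U : Matrix n n R) (φ : R →+* S) (e : S) :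
    (linearPencil A U).map (eval₂RingHom φ e) = A.map φ + e • U.map φ := by
  ext i j
  simp [linearPencil]
  ring

theorem linearPencil_map_evalRingHom (A U : Matrix n n R) (t : R) :
    (linearPencil A U).map (evalRingHom t) = A + t • U := by
  ext i j
  simp [linearPencil]
  ring

end Matrix

open Matrix in
theorem eigenvalue_linear_perturbation_estimate_general (n : ℕ)
    (A U₀ : Matrix (Fin n) (Fin n) ℝ) (a : ℝ) (p : ℕ)
    (hmult : ∀ i < p, (derivative^[i] A.charpoly).eval a = 0)
    (hp : (derivative^[p] A.charpoly).eval a ≠ 0)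
    (hf : deriv (fun t : ℝ => ((A + t • U₀).charpoly).eval a) 0 ≠ 0)
    (e : ℝ*) (he0 : e ≠ 0) (he : Infinitesimal e)
    (ξ : ℝ*) (hξ : Infinitesimal ξ)
    (hroot : ((A.map realToHyper + e • U₀.map realToHyper).charpoly).eval ((a : ℝ*) + ξ) = 0) :
    IsSt (ξ ^ p * (((derivative^[p] A.charpoly).eval a : ℝ) : ℝ*) /
      ((Nat.factorial p : ℝ*) * e *
        ((deriv (fun t : ℝ => ((A + t • U₀).charpoly).eval a) 0 : ℝ) : ℝ*))) (-1) := by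
  set G := taylor (C a) (linearPencil A U₀).charpoly
  have hGt (t : ℝ) : G.map (evalRingHom t) = taylor a (A + t • U₀).charpoly := by
    rw [map_taylor, ← charpoly_map, linearPencil_map_evalRingHom, coe_evalRingHom, eval_C]
  have hcoeff (j : ℕ) :
      (derivative^[j] A.charpoly).eval a = j.factorial * (G.coeff j).eval 0 := by
    rw [eval_iterate_derivative_eq_factorial_mul]
    simpa [taylor_coeff] using
      congrArg (fun P : ℝ[X] => (j.factorial : ℝ) * P.coeff j) (hGt 0).symm
  have hderiv : deriv (fun t : ℝ => ((A + t • U₀).charpoly).eval a) 0 =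
      (G.coeff 0).derivative.eval 0 := by
    have hG0 (t : ℝ) : ((A + t • U₀).charpoly).eval a = (G.coeff 0).eval t := by
      simpa [taylor_coeff_zero] using (congrArg (coeff · 0) (hGt t)).symm
    simp only [hG0, Polynomial.deriv]
  have hGroot : (G.map (eval₂RingHom realToHyper e)).eval ξ = 0 := by
    rw [map_taylor, taylor_eval, ← charpoly_map, linearPencil_map_eval₂RingHom, add_comm]
    simpa using hroot
  have key := isSt_pow_mul_div_of_eval_map_eq_zero G p
    (fun j hj => by simpa [hcoeff, Nat.factorial_ne_zero] using hmult j hj)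
    (by simpa [hcoeff, Nat.factorial_ne_zero] using hp) (hderiv ▸ hf) he0 he hξ hGroot
  have hfactorial : ((p.factorial : ℝ) : ℝ*) = p.factorial := map_natCast realToHyper _
  rw [hcoeff, Hyperreal.coe_mul, hfactorial, hderiv]
  convert key using 1
  field_simp

/-- Eigenvalue estimate for a linear perturbation `A + ε U₀` of a real matrix `A`:
if `a` is a root of `charpoly A` of multiplicity `p`, `f(t) := (charpoly (A + t U₀))(a)`
has `f'(0) ≠ 0`, and `a + ξ` is a root of `charpoly (A + ε U₀)` with `ξ` infinitesimal,
then `st (ξ^p · (charpoly A)⁽ᵖ⁾(a) / (p! · ε · f'(0))) = -1`. -/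
theorem eigenvalue_linear_perturbation_estimate (n : ℕ) (hn : 1 ≤ n)
    (A U₀ : Matrix (Fin n) (Fin n) ℝ) (a : ℝ) (p : ℕ)
    (hmult : ∀ i < p, (derivative^[i] A.charpoly).eval a = 0)
    (hp : (derivative^[p] A.charpoly).eval a ≠ 0)
    (hf : deriv (fun t : ℝ => ((A + t • U₀).charpoly).eval a) 0 ≠ 0)
    (e : ℝ*) (he0 : e ≠ 0) (he : Infinitesimal e)
    (ξ : ℝ*) (hξ : Infinitesimal ξ)
    (hroot : ((A.map realToHyper + e • U₀.map realToHyper).charpoly).eval ((a : ℝ*) + ξ) = 0) :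
    IsSt (ξ ^ p * (((derivative^[p] A.charpoly).eval a : ℝ) : ℝ*) /
      ((Nat.factorial p : ℝ*) * e *
        ((deriv (fun t : ℝ => ((A + t • U₀).charpoly).eval a) 0 : ℝ) : ℝ*))) (-1) :=
  eigenvalue_linear_perturbation_estimate_general n A U₀ a p hmult hp hf e he0 he ξ hξ hroot
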